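/- arXiv:math/0506246 — 3 statements merged into one kernel-verified Lean document; each statement's English description precedes it below -/
import Mathlib

section
/- Let G be a finite simple graph with vertex set V(G) = {v_1, …, v_n} and let 1 < k < n. Suppose that: (1) the union of the closed neighborhoods N[v_1] ∪ … ∪ N[v_k] equals V(G); (2) N[v_1] ∩ (N[v_2] ∪ … ∪ N[v_k]) = ∅; (3) |d(v_i) − d(v_j)| ≠ 1 for every i ∈ {1,…,k} and every j ∈ {1,…,n} with j ≠ i; (4) v_1 is the unique vertex of G of degree d(v_1); (5) for every i ∈ {2,…,k}, every vertex of G having degree d(v_i) lies in {v_2,…,v_k}. Let G' be a finite simple graph with vertex set V(G') = {v'_1, …, v'_n} such that for every j ∈ {1,…,n} the vertex-deleted subgraph G − v_j is isomorphic to G' − v'_j. Then G is isomorphic to G'. -/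
open Finset SimpleGraph

instance myInduceDec {V : Type*} (G : SimpleGraph V) [DecidableRel G.Adj] (s : Set V) :
    DecidableRel (G.induce s).Adj := fun a b => inferInstanceAs (Decidable (G.Adj a b))

private lemma abs_ne_one' {a b : ℤ} (h : |a - b| ≠ 1) : a - b ≠ 1 ∧ a - b ≠ -1 := by
  constructor <;> intro hh <;> apply h <;> rw [hh] <;> norm_num

private lemma iso_degree {V W : Type*} [Fintype V] [Fintype W] {H : SimpleGraph V}
    {H' : SimpleGraph W} [DecidableRel H.Adj] [DecidableRel H'.Adj] (e : H ≃g H') (v : V) :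
    H'.degree (e v) = H.degree v := by
  rw [← card_neighborSet_eq_degree, ← card_neighborSet_eq_degree]
  exact (Fintype.card_congr (e.mapNeighborSet v)).symm

private lemma iso_edges {V W : Type*} [Fintype V] [Fintype W] [DecidableEq V] [DecidableEq W]
    {H : SimpleGraph V} {H' : SimpleGraph W} [DecidableRel H.Adj] [DecidableRel H'.Adj]
    (e : H ≃g H') : #H.edgeFinset = #H'.edgeFinset := by
  rw [edgeFinset_card, edgeFinset_card]
  exact Fintype.card_congr e.mapEdgeSet

private lemma deg_induce {V : Type*} [Fintype V] [DecidableEq V]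
    (G : SimpleGraph V) [DecidableRel G.Adj] (j : V) (u : ({j}ᶜ : Set V)) :
    ((G.induce ({j}ᶜ : Set V)).degree u : ℤ)
      = G.degree (u : V) - (if G.Adj (u : V) j then 1 else 0) := by
  have hc : (G.induce ({j}ᶜ : Set V)).degree u = ((G.neighborFinset (u : V)).erase j).card := by
    rw [← card_neighborSet_eq_degree, ← Fintype.card_coe]
    refine Fintype.card_congr ⟨fun w => ⟨(w : ({j}ᶜ : Set V)), ?_⟩,
      fun x => ⟨⟨(x : V), ?_⟩, ?_⟩, fun w => by ext; rfl, fun x => by ext; rfl⟩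
    · rcases w with ⟨⟨x, hx⟩, hadj⟩
      simp only [Finset.mem_erase, mem_neighborFinset]
      exact ⟨hx, hadj⟩
    · have := x.prop
      rw [Finset.mem_erase] at this
      exact this.1
    · have := x.prop
      rw [Finset.mem_erase, mem_neighborFinset] at this
      exact this.2
  rw [hc]
  by_cases h : G.Adj (u : V) j
  · have hm : j ∈ G.neighborFinset (u : V) := by rwa [mem_neighborFinset]
    rw [Finset.card_erase_of_mem hm, if_pos h]
    have : 1 ≤ (G.neighborFinset (u : V)).card := Finset.card_pos.mpr ⟨j, hm⟩
    rw [SimpleGraph.degree]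
    omega
  · rw [Finset.erase_eq_of_notMem (by rwa [mem_neighborFinset]), if_neg h]
    rfl

private lemma twice_deleted_edges {V : Type*} [Fintype V] [DecidableEq V]
    (G : SimpleGraph V) [DecidableRel G.Adj] (j : V) :
    2 * (#(G.induce ({j}ᶜ : Set V)).edgeFinset : ℤ)
      = 2 * #G.edgeFinset - 2 * G.degree j := by
  have hh := (G.induce ({j}ᶜ : Set V)).sum_degrees_eq_twice_card_edges
  have hZ : (∑ v : ({j}ᶜ : Set V), ((G.induce ({j}ᶜ : Set V)).degree v : ℤ))
      = 2 * #(G.induce ({j}ᶜ : Set V)).edgeFinset := by exact_mod_cast hh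
  rw [← hZ, Finset.sum_congr rfl (fun v _ => deg_induce G j v), Finset.sum_sub_distrib]
  have hmem : ∀ x : V, x ∈ Finset.univ.erase j ↔ x ∈ ({j}ᶜ : Set V) := by simp
  have e1 : (∑ v : ({j}ᶜ : Set V), (G.degree (v : V) : ℤ))
      = ∑ x ∈ Finset.univ.erase j, (G.degree x : ℤ) :=
    (Finset.sum_subtype _ hmem (fun x => (G.degree x : ℤ))).symm
  have e1' : ∑ x ∈ Finset.univ.erase j, (G.degree x : ℤ)
      = 2 * #G.edgeFinset - G.degree j := by
    have h2 := Finset.sum_erase_add Finset.univ (fun x => (G.degree x : ℤ)) (Finset.mem_univ j)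
    have hall : (∑ x : V, (G.degree x : ℤ)) = 2 * #G.edgeFinset := by
      exact_mod_cast G.sum_degrees_eq_twice_card_edges
    linarith [h2, hall]
  have e2 : (∑ v : ({j}ᶜ : Set V), (if G.Adj (v : V) j then (1:ℤ) else 0))
      = (G.degree j : ℤ) := by
    rw [(Finset.sum_subtype _ hmem (fun x => (if G.Adj x j then (1:ℤ) else 0))).symm]
    rw [Finset.sum_boole]
    have hfe : (Finset.univ.erase j).filter (fun x => G.Adj x j) = G.neighborFinset j := by
      ext x
      simp only [Finset.mem_filter, Finset.mem_erase, Finset.mem_univ, true_and, and_true,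
        mem_neighborFinset]
      constructor
      · rintro ⟨-, h⟩; exact h.symm
      · intro h; exact ⟨h.ne', h.symm⟩
    rw [hfe]; rfl
  rw [e1, e1', e2]; ring

/-- **A new class of reconstructible graphs** (Hosaka).
Vertices of `G` and `G'` are indexed by `Fin n`, with `v_j` (resp. `v'_j`)
corresponding to the index `⟨j-1, _⟩`; in particular `v_1` is `⟨0, _⟩`. -/
theorem stmt_0 (n k : ℕ) (hk1 : 1 < k) (hkn : k < n)
    (G G' : SimpleGraph (Fin n)) [DecidableRel G.Adj] [DecidableRel G'.Adj]
    -- (1) N[v_1] ∪ … ∪ N[v_k] = V(G)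
    (h1 : (⋃ i ∈ {i : Fin n | (i : ℕ) < k},
        insert i (G.neighborSet i)) = Set.univ)
    -- (2) N[v_1] ∩ (N[v_2] ∪ … ∪ N[v_k]) = ∅
    (h2 : insert (⟨0, by omega⟩ : Fin n) (G.neighborSet ⟨0, by omega⟩) ∩
        (⋃ i ∈ {i : Fin n | 0 < (i : ℕ) ∧ (i : ℕ) < k},
          insert i (G.neighborSet i)) = ∅)
    -- (3) |d(v_i) − d(v_j)| ≠ 1 for i ∈ {1,…,k}, j ≠ i
    (h3 : ∀ i j : Fin n, (i : ℕ) < k → j ≠ i →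
        |(G.degree i : ℤ) - (G.degree j : ℤ)| ≠ 1)
    -- (4) v_1 is the unique vertex of degree d(v_1)
    (h4 : ∀ w : Fin n, G.degree w = G.degree ⟨0, by omega⟩ → w = ⟨0, by omega⟩)
    -- (5) every vertex of degree d(v_i), i ∈ {2,…,k}, lies in {v_2,…,v_k}
    (h5 : ∀ i : Fin n, 0 < (i : ℕ) → (i : ℕ) < k →
        ∀ w : Fin n, G.degree w = G.degree i → 0 < (w : ℕ) ∧ (w : ℕ) < k)
    -- G − v_j ≅ G' − v'_j for every j
    (hdel : ∀ j : Fin n,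
        Nonempty (G.induce ({j}ᶜ : Set (Fin n)) ≃g G'.induce ({j}ᶜ : Set (Fin n)))) :
    Nonempty (G ≃g G') := by
  classical
  have hn0 : 0 < n := by omega
  set v0 : Fin n := ⟨0, hn0⟩ with hv0def
  have ψ : ∀ j : Fin n, G.induce ({j}ᶜ : Set (Fin n)) ≃g G'.induce ({j}ᶜ : Set (Fin n)) :=
    fun j => Classical.choice (hdel j)
  -- Kelly: the degrees of G and G' agree pointwise
  have key : ∀ j : Fin n, (#G.edgeFinset : ℤ) - G.degree j = #G'.edgeFinset - G'.degree j := by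
    intro j
    have t1 := twice_deleted_edges G j
    have t2 := twice_deleted_edges G' j
    have t3 : #(G.induce ({j}ᶜ : Set (Fin n))).edgeFinset
        = #(G'.induce ({j}ᶜ : Set (Fin n))).edgeFinset := iso_edges (ψ j)
    have t3' : (#(G.induce ({j}ᶜ : Set (Fin n))).edgeFinset : ℤ)
        = #(G'.induce ({j}ᶜ : Set (Fin n))).edgeFinset := by exact_mod_cast t3
    linarith
  have hEE : (#G.edgeFinset : ℤ) = #G'.edgeFinset := by
    have hsum := Finset.sum_congr rfl (fun j (_ : j ∈ (Finset.univ : Finset (Fin n))) => key j)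
    have hG1 : ∑ j : Fin n, ((#G.edgeFinset : ℤ) - G.degree j)
        = n * #G.edgeFinset - 2 * #G.edgeFinset := by
      rw [Finset.sum_sub_distrib, Finset.sum_const, Finset.card_univ, Fintype.card_fin]
      have : (∑ j : Fin n, (G.degree j : ℤ)) = 2 * #G.edgeFinset := by
        exact_mod_cast G.sum_degrees_eq_twice_card_edges
      rw [this]; ring
    have hG2 : ∑ j : Fin n, ((#G'.edgeFinset : ℤ) - G'.degree j)
        = n * #G'.edgeFinset - 2 * #G'.edgeFinset := by
      rw [Finset.sum_sub_distrib, Finset.sum_const, Finset.card_univ, Fintype.card_fin]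
      have : (∑ j : Fin n, (G'.degree j : ℤ)) = 2 * #G'.edgeFinset := by
        exact_mod_cast G'.sum_degrees_eq_twice_card_edges
      rw [this]; ring
    rw [hG1, hG2] at hsum
    have hn3 : (3 : ℤ) ≤ n := by exact_mod_cast (by omega : 3 ≤ n)
    nlinarith [hsum]
  have hdeg : ∀ j : Fin n, G'.degree j = G.degree j := by
    intro j
    have := key j
    omega
  -- basic degree equation for any deletion
  have base : ∀ (j : Fin n) (u : ({j}ᶜ : Set (Fin n))),
      (G.degree ((ψ j) u : Fin n) : ℤ)
          - (if G'.Adj ((ψ j) u : Fin n) j then 1 else 0)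
        = G.degree (u : Fin n) - (if G.Adj (u : Fin n) j then 1 else 0) := by
    intro j u
    have d1 := deg_induce G j u
    have d2 := deg_induce G' j ((ψ j) u)
    have d3 : (G'.induce ({j}ᶜ : Set (Fin n))).degree ((ψ j) u)
        = (G.induce ({j}ᶜ : Set (Fin n))).degree u := iso_degree (ψ j) u
    rw [hdeg] at d2
    rw [d3, d1] at d2
    linarith
  -- consequences of h2
  have hdisj : ∀ u : Fin n, (u = v0 ∨ G.Adj v0 u) →
      ∀ i : Fin n, 0 < (i : ℕ) → (i : ℕ) < k → ¬(u = i ∨ G.Adj i u) := by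
    intro u hu i hi1 hi2 hcon
    have hmem : u ∈ (insert (⟨0, by omega⟩ : Fin n) (G.neighborSet ⟨0, by omega⟩) ∩
        (⋃ i ∈ {i : Fin n | 0 < (i : ℕ) ∧ (i : ℕ) < k},
          insert i (G.neighborSet i))) := by
      constructor
      · rcases hu with h | h
        · exact Set.mem_insert_iff.mpr (Or.inl h)
        · exact Set.mem_insert_iff.mpr (Or.inr h)
      · refine Set.mem_biUnion (show i ∈ {i : Fin n | 0 < (i : ℕ) ∧ (i : ℕ) < k} from ⟨hi1, hi2⟩) ?_
        rcases hcon with h | h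
        · exact Set.mem_insert_iff.mpr (Or.inl h)
        · exact Set.mem_insert_iff.mpr (Or.inr h)
    rw [h2] at hmem
    exact hmem
  have hAnotS : ∀ u : Fin n, G.Adj v0 u → ∀ i : Fin n, 0 < (i : ℕ) → (i : ℕ) < k →
      u ≠ i ∧ ¬ G.Adj i u := by
    intro u hu i hi1 hi2
    have := hdisj u (Or.inr hu) i hi1 hi2
    exact ⟨fun h => this (Or.inl h), fun h => this (Or.inr h)⟩
  have hnadj0S : ∀ i : Fin n, 0 < (i : ℕ) → (i : ℕ) < k → ¬ G.Adj v0 i := by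
    intro i hi1 hi2 hadj
    exact hdisj i (Or.inr hadj) i hi1 hi2 (Or.inl rfl)
  -- coverage from h1
  have hcov : ∀ x : Fin n, ∃ i : Fin n, (i : ℕ) < k ∧ (x = i ∨ G.Adj i x) := by
    intro x
    have hx : x ∈ (⋃ i ∈ {i : Fin n | (i : ℕ) < k}, insert i (G.neighborSet i)) := by
      rw [h1]; trivial
    rcases Set.mem_iUnion₂.mp hx with ⟨i, hik, hmem⟩
    exact ⟨i, hik, Set.mem_insert_iff.mp hmem⟩
  -- pinning v0
  have pin0 : ∀ (j : Fin n) (u : ({j}ᶜ : Set (Fin n))), (u : Fin n) = v0 →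
      ((ψ j) u : Fin n) = v0 ∧ (G'.Adj v0 j ↔ G.Adj v0 j) := by
    intro j u hu
    have hb := base j u
    rw [hu] at hb
    set x : Fin n := ((ψ j) u : Fin n) with hxdef
    have hx : x = v0 := by
      by_contra hne
      have h3' := abs_ne_one' (h3 v0 x (by simp [hv0def]; omega) hne)
      have hdd : G.degree x = G.degree v0 := by
        obtain ⟨p, q⟩ := h3'
        split_ifs at hb <;> omega
      exact hne (h4 x hdd)
    rw [hx] at hb
    refine ⟨hx, ?_⟩
    split_ifs at hb with p1 p2 p2
    · exact ⟨fun _ => p2, fun _ => p1⟩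
    · omega
    · omega
    · exact ⟨fun h => absurd h p1, fun h => absurd h p2⟩
  -- pinning the S' block
  have pinS : ∀ (j : Fin n) (u : ({j}ᶜ : Set (Fin n))),
      0 < ((u : Fin n) : ℕ) → ((u : Fin n) : ℕ) < k →
      (0 < (((ψ j) u : Fin n) : ℕ) ∧ (((ψ j) u : Fin n) : ℕ) < k) ∧
        (G'.Adj ((ψ j) u : Fin n) j ↔ G.Adj (u : Fin n) j) := by
    intro j u hu1 hu2
    have hb := base j u
    set x : Fin n := ((ψ j) u : Fin n) with hxdef
    set w : Fin n := (u : Fin n) with hwdef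
    have hdd : G.degree x = G.degree w := by
      by_cases hne : x = w
      · rw [hne]
      · obtain ⟨p, q⟩ := abs_ne_one' (h3 w x hu2 hne)
        split_ifs at hb <;> omega
    constructor
    · by_cases hne : x = w
      · rw [hne]; exact ⟨hu1, hu2⟩
      · exact h5 w hu1 hu2 x hdd
    · rw [hdd] at hb
      split_ifs at hb with p1 p2 p2
      · exact ⟨fun _ => p2, fun _ => p1⟩
      · omega
      · omega
      · exact ⟨fun h => absurd h p1, fun h => absurd h p2⟩
  -- the neighborhood of v0 is the same in G and G'
  have hN0 : ∀ x : Fin n, x ≠ v0 → (G'.Adj v0 x ↔ G.Adj v0 x) := by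
    intro x hx
    have hmem : v0 ∈ ({x}ᶜ : Set (Fin n)) := Set.mem_compl_singleton_iff.mpr (Ne.symm hx)
    exact (pin0 x ⟨v0, hmem⟩ rfl).2
  -- coverage of the outside by S' in G'
  have hcov' : ∀ x : Fin n, x ≠ v0 → ¬ G.Adj v0 x →
      ¬ (0 < (x : ℕ) ∧ (x : ℕ) < k) →
      ∃ y : Fin n, (0 < (y : ℕ) ∧ (y : ℕ) < k) ∧ G'.Adj y x := by
    intro x hxv0 hxnadj hxS
    obtain ⟨i, hik, hcase⟩ := hcov x
    have hi0 : 0 < (i : ℕ) := by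
      rcases Nat.eq_zero_or_pos (i : ℕ) with h0 | h
      · exfalso
        have : i = v0 := by
          apply Fin.ext; simpa [hv0def] using h0
        rw [this] at hcase
        rcases hcase with h | h
        · exact hxv0 h
        · exact hxnadj h
      · exact h
    have hxi : x ≠ i := by
      intro h
      exact hxS ⟨by rw [h]; exact hi0, by rw [h]; exact hik⟩
    have hadj : G.Adj i x := hcase.resolve_left hxi
    have hmem : i ∈ ({x}ᶜ : Set (Fin n)) := Set.mem_compl_singleton_iff.mpr hadj.ne
    obtain ⟨hS, hiff⟩ := pinS x ⟨i, hmem⟩ hi0 hik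
    exact ⟨_, hS, hiff.mpr hadj⟩
  -- work with the deletion of v0
  set s0 : Set (Fin n) := ({v0}ᶜ : Set (Fin n)) with hs0def
  set φ : G.induce s0 ≃g G'.induce s0 := ψ v0 with hφdef
  have φS : ∀ u : s0, 0 < ((u : Fin n) : ℕ) → ((u : Fin n) : ℕ) < k →
      0 < ((φ u : Fin n) : ℕ) ∧ ((φ u : Fin n) : ℕ) < k :=
    fun u h1 h2 => (pinS v0 u h1 h2).1
  -- φ.symm also preserves S'
  have hSsymm : ∀ x : s0, 0 < ((x : Fin n) : ℕ) → ((x : Fin n) : ℕ) < k →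
      0 < ((φ.symm x : Fin n) : ℕ) ∧ ((φ.symm x : Fin n) : ℕ) < k := by
    have hinj : Function.Injective (fun u : s0 => φ u) := fun a b h => φ.toEquiv.injective h
    set T : Finset s0 :=
      Finset.univ.filter (fun u : s0 => 0 < ((u : Fin n) : ℕ) ∧ ((u : Fin n) : ℕ) < k) with hT
    have hsub : T.image (fun u : s0 => φ u) ⊆ T := by
      intro x hx
      rcases Finset.mem_image.mp hx with ⟨u, hu, rfl⟩
      rcases Finset.mem_filter.mp hu with ⟨-, hu1, hu2⟩
      exact Finset.mem_filter.mpr ⟨Finset.mem_univ _, φS u hu1 hu2⟩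
    have himg : T.image (fun u : s0 => φ u) = T :=
      Finset.eq_of_subset_of_card_le hsub (le_of_eq (Finset.card_image_of_injective T hinj).symm)
    intro x hx1 hx2
    have hxT : x ∈ T := Finset.mem_filter.mpr ⟨Finset.mem_univ _, hx1, hx2⟩
    rw [← himg] at hxT
    rcases Finset.mem_image.mp hxT with ⟨u, hu, hux⟩
    have : φ.symm x = u := by rw [← hux]; exact φ.symm_apply_apply u
    rw [this]
    rcases Finset.mem_filter.mp hu with ⟨-, hu1, hu2⟩
    exact ⟨hu1, hu2⟩
  -- forward: φ maps neighbors of v0 to neighbors of v0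
  have φA : ∀ u : s0, G.Adj v0 (u : Fin n) → G'.Adj (φ u : Fin n) v0 := by
    intro u hadj
    by_contra hnadj
    have hb := base v0 u
    rw [if_pos (by rwa [G.adj_comm] : G.Adj (u : Fin n) v0), if_neg hnadj] at hb
    set x : Fin n := (φ u : Fin n) with hxdef
    have hxne0 : x ≠ v0 := (φ u).prop
    by_cases hxS : 0 < (x : ℕ) ∧ (x : ℕ) < k
    · have hune : (u : Fin n) ≠ x := fun h =>
        (hAnotS (u : Fin n) hadj x hxS.1 hxS.2).1 h
      obtain ⟨p, q⟩ := abs_ne_one' (h3 x (u : Fin n) hxS.2 hune)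
      omega
    · have hnadj0x : ¬ G.Adj v0 x := fun h => hnadj (by
        rw [G'.adj_comm]; exact (hN0 x hxne0).mpr h)
      obtain ⟨y, hyS, hyadj⟩ := hcov' x hxne0 hnadj0x hxS
      have hyne0 : y ≠ v0 := by
        intro h; rw [h] at hyS; simp [hv0def] at hyS
      have hYmem : y ∈ s0 := Set.mem_compl_singleton_iff.mpr hyne0
      have hadj' : (G'.induce s0).Adj ⟨y, hYmem⟩ (φ u) := hyadj
      have hGadj : (G.induce s0).Adj (φ.symm ⟨y, hYmem⟩) u := by
        have h := φ.symm.map_rel_iff.mpr hadj'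
        rwa [φ.symm_apply_apply] at h
      have hsymmS := hSsymm ⟨y, hYmem⟩ hyS.1 hyS.2
      exact (hAnotS (u : Fin n) hadj _ hsymmS.1 hsymmS.2).2 hGadj
  -- full iff via counting
  have hNB : ∀ u : s0, G.Adj v0 (u : Fin n) ↔ G'.Adj (φ u : Fin n) v0 := by
    set NB : Finset s0 := Finset.univ.filter (fun u : s0 => G.Adj v0 (u : Fin n)) with hNBdef
    set NB' : Finset s0 := Finset.univ.filter (fun u : s0 => G'.Adj (u : Fin n) v0) with hNB'def
    have hinj : Function.Injective (fun u : s0 => φ u) := fun a b h => φ.toEquiv.injective h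
    have hsub : NB.image (fun u : s0 => φ u) ⊆ NB' := by
      intro x hx
      rcases Finset.mem_image.mp hx with ⟨u, hu, rfl⟩
      exact Finset.mem_filter.mpr ⟨Finset.mem_univ _, φA u (Finset.mem_filter.mp hu).2⟩
    have hcard1 : NB.card = G.degree v0 := by
      rw [hNBdef, ← Fintype.card_subtype, ← card_neighborSet_eq_degree]
      refine Fintype.card_congr ⟨fun u => ⟨(u : s0), u.prop⟩,
        fun w => ⟨⟨(w : Fin n), Set.mem_compl_singleton_iff.mpr (Adj.ne' w.prop)⟩, w.prop⟩,
        fun u => by ext; rfl, fun w => by ext; rfl⟩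
    have hcard2 : NB'.card = G'.degree v0 := by
      rw [hNB'def, ← Fintype.card_subtype, ← card_neighborSet_eq_degree]
      refine Fintype.card_congr ⟨fun u => ⟨(u : s0), u.prop.symm⟩,
        fun w => ⟨⟨(w : Fin n), Set.mem_compl_singleton_iff.mpr (Adj.ne' w.prop)⟩,
          (Adj.symm w.prop)⟩,
        fun u => by ext; rfl, fun w => by ext; rfl⟩
    have himg : NB.image (fun u : s0 => φ u) = NB' :=
      Finset.eq_of_subset_of_card_le hsub (by
        rw [Finset.card_image_of_injective NB hinj, hcard1, hcard2, hdeg])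
    intro u
    constructor
    · exact φA u
    · intro h
      have hmem : φ u ∈ NB' := Finset.mem_filter.mpr ⟨Finset.mem_univ _, h⟩
      rw [← himg] at hmem
      rcases Finset.mem_image.mp hmem with ⟨w, hw, hwu⟩
      have hwu' : w = u := hinj hwu
      rw [← hwu']
      exact (Finset.mem_filter.mp hw).2
  -- assemble the isomorphism
  have hs0mem : ∀ a : Fin n, a ≠ v0 → a ∈ s0 := fun a h => Set.mem_compl_singleton_iff.mpr h
  let F : Fin n → Fin n := fun a => if h : a = v0 then v0 else ↑(φ ⟨a, hs0mem a h⟩)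
  let Fi : Fin n → Fin n := fun a => if h : a = v0 then v0 else ↑(φ.symm ⟨a, hs0mem a h⟩)
  have hlinv : Function.LeftInverse Fi F := by
    intro a
    by_cases h : a = v0
    · simp [F, Fi, h]
    · have hne : (↑(φ ⟨a, hs0mem a h⟩) : Fin n) ≠ v0 := (φ ⟨a, hs0mem a h⟩).prop
      simp only [F, Fi, dif_neg h, dif_neg hne]
      have heq : (⟨↑(φ ⟨a, hs0mem a h⟩), hs0mem _ hne⟩ : s0) = φ ⟨a, hs0mem a h⟩ := rfl
      rw [heq, φ.symm_apply_apply]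
  have hrinv : Function.RightInverse Fi F := by
    intro a
    by_cases h : a = v0
    · simp [F, Fi, h]
    · have hne : (↑(φ.symm ⟨a, hs0mem a h⟩) : Fin n) ≠ v0 := (φ.symm ⟨a, hs0mem a h⟩).prop
      simp only [F, Fi, dif_neg h, dif_neg hne]
      have heq : (⟨↑(φ.symm ⟨a, hs0mem a h⟩), hs0mem _ hne⟩ : s0) = φ.symm ⟨a, hs0mem a h⟩ := rfl
      rw [heq, φ.apply_symm_apply]
  refine ⟨⟨⟨F, Fi, hlinv, hrinv⟩, ?_⟩⟩
  intro a b
  show G'.Adj (F a) (F b) ↔ G.Adj a b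
  by_cases ha : a = v0 <;> by_cases hb : b = v0
  · subst ha; subst hb
    simp [F]
  · subst ha
    simp only [F, dif_pos rfl, dif_neg hb]
    rw [G'.adj_comm]
    exact (hNB ⟨b, hs0mem b hb⟩).symm
  · subst hb
    simp only [F, dif_pos rfl, dif_neg ha]
    rw [G.adj_comm]
    exact (hNB ⟨a, hs0mem a ha⟩).symm
  · simp only [F, dif_neg ha, dif_neg hb]
    exact φ.map_rel_iff
end

section
/- Let G and G' be finite simple graphs with vertex sets V(G) = {v_1, …, v_n} and V(G') = {v'_1, …, v'_n}, where n ≥ 3. If for every j ∈ {1,…,n} the vertex-deleted subgraph G − v_j is isomorphic to G' − v'_j, then d(v_j) = d(v'_j) for every j ∈ {1,…,n}. -/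
open Finset

instance inducedDecidable {n : ℕ} (G : SimpleGraph (Fin n)) [DecidableRel G.Adj]
    (s : Set (Fin n)) [DecidablePred (· ∈ s)] : DecidableRel (G.induce s).Adj :=
  fun a b => decidable_of_iff (G.Adj a.1 b.1) (by simp [SimpleGraph.comap_adj])

lemma aux_count {n : ℕ} (G : SimpleGraph (Fin n)) [DecidableRel G.Adj] (j : Fin n) :
    2 * (G.induce ({j}ᶜ : Set (Fin n))).edgeFinset.card + 2 * G.degree j
      = 2 * G.edgeFinset.card := by
  classical
  rw [SimpleGraph.two_mul_card_edgeFinset, SimpleGraph.two_mul_card_edgeFinset]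
  set S : Finset (Fin n × Fin n) := univ.filter fun p ↦ G.Adj p.1 p.2 with hS
  have hA : #(univ.filter fun (p : ↥({j}ᶜ : Set (Fin n)) × ↥({j}ᶜ : Set (Fin n))) ↦
      (G.induce ({j}ᶜ : Set (Fin n))).Adj p.1 p.2)
      = #(S.filter fun p ↦ p.1 ≠ j ∧ p.2 ≠ j) := by
    apply Finset.card_bij (fun p _ ↦ (p.1.1, p.2.1))
    · rintro ⟨a, b⟩ hp
      simp only [mem_filter, mem_univ, true_and, hS] at hp ⊢
      exact ⟨hp, a.2, b.2⟩
    · rintro ⟨a, b⟩ _ ⟨c, d⟩ _ h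
      simp only [Prod.mk.injEq] at h
      exact Prod.ext (Subtype.ext h.1) (Subtype.ext h.2)
    · rintro ⟨a, b⟩ hp
      simp only [mem_filter, mem_univ, true_and, hS] at hp
      exact ⟨(⟨a, hp.2.1⟩, ⟨b, hp.2.2⟩), by simp [hp.1], rfl⟩
  have hB : #(S.filter fun p ↦ p.1 = j) = G.degree j := by
    rw [← SimpleGraph.card_neighborFinset_eq_degree]
    apply Finset.card_bij (fun p _ ↦ p.2)
    · rintro ⟨a, b⟩ hp
      simp only [mem_filter, mem_univ, true_and, hS] at hp
      simp [SimpleGraph.mem_neighborFinset, ← hp.2, hp.1]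
    · rintro ⟨a, b⟩ ha ⟨c, d⟩ hc h
      simp only [mem_filter, hS] at ha hc
      simp only at h
      simp [Prod.ext_iff, ha.2, hc.2, h]
    · intro b hb
      simp only [SimpleGraph.mem_neighborFinset] at hb
      exact ⟨(j, b), by simp [hS, hb], rfl⟩
  have hC : #(S.filter fun p ↦ p.2 = j) = G.degree j := by
    rw [← SimpleGraph.card_neighborFinset_eq_degree]
    apply Finset.card_bij (fun p _ ↦ p.1)
    · rintro ⟨a, b⟩ hp
      simp only [mem_filter, mem_univ, true_and, hS] at hp
      simp only [SimpleGraph.mem_neighborFinset, ← hp.2]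
      exact hp.1.symm
    · rintro ⟨a, b⟩ ha ⟨c, d⟩ hc h
      simp only [mem_filter, hS] at ha hc
      simp only at h
      simp [Prod.ext_iff, ha.2, hc.2, h]
    · intro b hb
      simp only [SimpleGraph.mem_neighborFinset] at hb
      exact ⟨(b, j), by simp [hS, hb.symm], rfl⟩
  have hsplit : #(S.filter fun p ↦ ¬(p.1 = j ∨ p.2 = j)) + #(S.filter fun p ↦ p.1 = j ∨ p.2 = j)
      = #S := by
    rw [add_comm]
    exact Finset.card_filter_add_card_filter_not _
  have hdisj : Disjoint (S.filter fun p ↦ p.1 = j) (S.filter fun p ↦ p.2 = j) := by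
    rw [Finset.disjoint_left]
    rintro ⟨a, b⟩ h1 h2
    simp only [mem_filter, mem_univ, true_and, hS] at h1 h2
    exact G.irrefl (h1.2 ▸ h2.2 ▸ h1.1)
  have hunion : (S.filter fun p ↦ p.1 = j ∨ p.2 = j)
      = (S.filter fun p ↦ p.1 = j) ∪ (S.filter fun p ↦ p.2 = j) :=
    Finset.filter_or _ _ _
  have : #(S.filter fun p ↦ p.1 = j ∨ p.2 = j) = 2 * G.degree j := by
    rw [hunion, Finset.card_union_of_disjoint hdisj, hB, hC]; ring
  have hne : (S.filter fun p ↦ ¬(p.1 = j ∨ p.2 = j)) = S.filter fun p ↦ p.1 ≠ j ∧ p.2 ≠ j := by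
    apply Finset.filter_congr
    intro p _
    simp [not_or]
  rw [hA, ← hne, ← hsplit, this]

/-- If all corresponding vertex-deleted subgraphs of `G` and `G'` are isomorphic
(`n ≥ 3`), then corresponding vertices have equal degrees.
Vertices are indexed by `Fin n`, `v_j` corresponding to index `⟨j-1, _⟩`. -/
theorem stmt_1 (n : ℕ) (hn : 3 ≤ n)
    (G G' : SimpleGraph (Fin n)) [DecidableRel G.Adj] [DecidableRel G'.Adj]
    (hdel : ∀ j : Fin n,
        Nonempty (G.induce ({j}ᶜ : Set (Fin n)) ≃g G'.induce ({j}ᶜ : Set (Fin n)))) :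
    ∀ j : Fin n, G.degree j = G'.degree j := by
  classical
  set E := #G.edgeFinset
  set E' := #G'.edgeFinset
  have key : ∀ j : Fin n, 2 * E + 2 * G'.degree j = 2 * E' + 2 * G.degree j := by
    intro j
    obtain ⟨f⟩ := hdel j
    have hiso := SimpleGraph.Iso.card_edgeFinset_eq f
    have h1 := aux_count G j
    have h2 := aux_count G' j
    omega
  have hsum : (n : ℤ) * (2 * E) + 2 * (2 * E') = n * (2 * E') + 2 * (2 * E) := by
    have h1 : ∑ j : Fin n, (2 * E + 2 * G'.degree j)
        = ∑ j : Fin n, (2 * E' + 2 * G.degree j) :=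
      Finset.sum_congr rfl fun j _ ↦ key j
    simp only [Finset.sum_add_distrib, Finset.sum_const, card_univ, Fintype.card_fin,
      smul_eq_mul, ← Finset.mul_sum, SimpleGraph.sum_degrees_eq_twice_card_edges] at h1
    exact_mod_cast h1
  have hE : E = E' := by
    have h2 : (2 * (n : ℤ) - 4) * ((E : ℤ) - E') = 0 := by linear_combination hsum
    rcases mul_eq_zero.mp h2 with h | h
    · exfalso; have : (3 : ℤ) ≤ n := by exact_mod_cast hn
      omega
    · omega
  intro j
  have := key j
  omega
end

section
/- Let G and G' be finite simple graphs with vertex sets V(G) = {v_1, …, v_n} and V(G') = {v'_1, …, v'_n} such that d(v_m) = d(v'_m) for every m ∈ {1,…,n}. Suppose that |d(v_1) − d(v_m)| > 1 for every m ∈ {2,…,n}. Then for every j ∈ {2,…,n}, every isomorphism f : G − v_j → G' − v'_j satisfies f(v_1) = v'_1. -/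
open SimpleGraph Finset

section aux
variable {n : ℕ}

lemma ind_deg (G : SimpleGraph (Fin n)) [DecidableRel G.Adj] (j v : Fin n)
    (hv : v ∈ ({j}ᶜ : Set (Fin n))) :
    (G.induce ({j}ᶜ : Set (Fin n))).degree ⟨v, hv⟩
      = G.degree v - (if G.Adj v j then 1 else 0) := by
  classical
  have hcard : (G.induce ({j}ᶜ : Set (Fin n))).degree ⟨v, hv⟩
      = ((G.neighborFinset v).filter (· ≠ j)).card := by
    rw [← SimpleGraph.card_neighborFinset_eq_degree]
    refine Finset.card_bij (fun u _ => (u : Fin n)) ?_ ?_ ?_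
    · rintro ⟨u, hu⟩ h
      simp only [SimpleGraph.mem_neighborFinset] at h ⊢
      simp only [Finset.mem_filter, SimpleGraph.mem_neighborFinset]
      exact ⟨h, hu⟩
    · rintro ⟨u, hu⟩ _ ⟨u', hu'⟩ _ h
      simpa using h
    · intro u hu
      simp only [Finset.mem_filter, SimpleGraph.mem_neighborFinset] at hu
      refine ⟨⟨u, hu.2⟩, ?_, rfl⟩
      simp [SimpleGraph.mem_neighborFinset, SimpleGraph.comap_adj, hu.1]
  rw [hcard]
  by_cases hadj : G.Adj v j
  · have : (G.neighborFinset v).filter (· ≠ j) = (G.neighborFinset v).erase j := by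
      ext u; simp [Finset.mem_erase, and_comm]
    rw [this, Finset.card_erase_of_mem (by simpa [SimpleGraph.mem_neighborFinset] using hadj)]
    simp [hadj, SimpleGraph.card_neighborFinset_eq_degree]
  · have : (G.neighborFinset v).filter (· ≠ j) = G.neighborFinset v := by
      ext u
      simp only [Finset.mem_filter, SimpleGraph.mem_neighborFinset, and_iff_left_iff_imp]
      rintro h rfl; exact hadj h
    rw [this]
    simp [hadj, SimpleGraph.card_neighborFinset_eq_degree]

end aux

/-- If corresponding degrees of `G` and `G'` agree and `|d(v_1) − d(v_m)| > 1` for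
all `m ∈ {2,…,n}`, then for every `j ∈ {2,…,n}` every isomorphism
`f : G − v_j → G' − v'_j` sends `v_1` to `v'_1`.
Vertices are indexed by `Fin n`, `v_j` corresponding to index `⟨j-1, _⟩`. -/
theorem stmt_3 (n : ℕ) (hn : 0 < n)
    (G G' : SimpleGraph (Fin n)) [DecidableRel G.Adj] [DecidableRel G'.Adj]
    (hdeg : ∀ m : Fin n, G.degree m = G'.degree m)
    (hgap : ∀ m : Fin n, 0 < (m : ℕ) →
        |(G.degree ⟨0, hn⟩ : ℤ) - (G.degree m : ℤ)| > 1) :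
    ∀ j : Fin n, 0 < (j : ℕ) →
      ∀ f : G.induce ({j}ᶜ : Set (Fin n)) ≃g G'.induce ({j}ᶜ : Set (Fin n)),
        ∀ h1 : (⟨0, hn⟩ : Fin n) ∈ ({j}ᶜ : Set (Fin n)),
          (f ⟨⟨0, hn⟩, h1⟩ : Fin n) = ⟨0, hn⟩ := by
  classical
  intro j hj f h1
  set v0 : Fin n := ⟨0, hn⟩
  set w : ({j}ᶜ : Set (Fin n)) := f ⟨v0, h1⟩ with hw
  by_contra hne
  have hwpos : 0 < ((w : Fin n) : ℕ) := by
    rcases Nat.eq_zero_or_pos ((w : Fin n) : ℕ) with h | h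
    · exact absurd (Fin.ext h) hne
    · exact h
  -- iso preserves induced degree
  have hiso : (G.induce ({j}ᶜ : Set (Fin n))).degree ⟨v0, h1⟩
      = (G'.induce ({j}ᶜ : Set (Fin n))).degree w := by
    rw [← SimpleGraph.card_neighborSet_eq_degree, ← SimpleGraph.card_neighborSet_eq_degree]
    exact Fintype.card_congr (f.mapNeighborSet ⟨v0, h1⟩)
  have e1 := ind_deg G j v0 h1
  have e2 := ind_deg G' j (w : Fin n) w.2
  have hwdeg : G'.degree (w : Fin n) = G.degree (w : Fin n) := (hdeg _).symm
  have hgap' := hgap (w : Fin n) hwpos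
  have hw2 : ((f ⟨v0, h1⟩ : ({j}ᶜ : Set (Fin n))) : Fin n) = (w : Fin n) := rfl
  rw [e1, e2, hwdeg] at hiso
  rcases lt_abs.mp hgap' with h | h <;>
    by_cases a1 : G.Adj v0 j <;> by_cases a2 : G'.Adj (w : Fin n) j <;>
    simp only [a1, a2, if_true, if_false] at hiso <;> omega
end
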